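/- arXiv:1005.3178 — 3 statements merged into one kernel-verified Lean document; each statement's English description precedes it below -/
import Mathlib

section
/- Let (A,j)_K be a C*-net bundle over a pathwise connected poset and fix o ∈ K. The assignment sending a representation (π,U) of (A,j)_K to the covariant representation (π_o, U_*) of the holonomy dynamical system (A_o, π₁ᵒ(K), j_*), where U_{*,[p]} := U_p for loops p at o, induces a bijection between unitary equivalence classes of representations of (A,j)_K and unitary equivalence classes of covariant representations of (A_o, π₁ᵒ(K), j_*). -/
noncomputable section

universe u v w u' v' w' u'' v'' w''

namespace AQFT

/-! ### Simplices and paths in a poset -/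

structure Simplex1 (K : Type u) [PartialOrder K] : Type u where
  supp : K
  d0 : K
  d1 : K
  le0 : d0 ≤ supp
  le1 : d1 ≤ supp

namespace Simplex1

variable {K : Type u} [PartialOrder K]

def op (s : Simplex1 K) : Simplex1 K := ⟨s.supp, s.d1, s.d0, s.le1, s.le0⟩

def deg (a : K) : Simplex1 K := ⟨a, a, a, le_rfl, le_rfl⟩

def map {L : Type u'} [PartialOrder L] (f : K →o L) (s : Simplex1 K) : Simplex1 L :=
  ⟨f s.supp, f s.d0, f s.d1, f.monotone s.le0, f.monotone s.le1⟩

end Simplex1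

structure Simplex2 (K : Type u) [PartialOrder K] : Type u where
  supp : K
  d0 : Simplex1 K
  d1 : Simplex1 K
  d2 : Simplex1 K
  le0 : d0.supp ≤ supp
  le1 : d1.supp ≤ supp
  le2 : d2.supp ≤ supp
  h00 : d0.d0 = d1.d0
  h11 : d1.d1 = d2.d1
  h10 : d0.d1 = d2.d0

inductive SPath (K : Type u) [PartialOrder K] : K → K → Type u
  | nil (a : K) : SPath K a a
  | cons {a b c : K} (p : SPath K a b) (s : Simplex1 K) (h1 : s.d1 = b) (h0 : s.d0 = c) :
      SPath K a c

namespace SPath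

variable {K : Type u} [PartialOrder K]

/-- The path consisting of a single 1-simplex. -/
def single {a b : K} (s : Simplex1 K) (h1 : s.d1 = a) (h0 : s.d0 = b) : SPath K a b :=
  .cons (.nil a) s h1 h0

/-- Composition of paths: first traverse `p`, then `q`. -/
def comp {a b : K} (p : SPath K a b) : {c : K} → SPath K b c → SPath K a c
  | _, .nil _ => p
  | _, .cons q s h1 h0 => .cons (p.comp q) s h1 h0

/-- The opposite (reverse) of a path. -/
def reverse {a : K} : {b : K} → SPath K a b → SPath K b a
  | _, .nil _ => .nil a
  | _, .cons p s h1 h0 => (single s.op h0 h1).comp p.reverse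

@[simp] theorem comp_nil {a b : K} (p : SPath K a b) : p.comp (.nil b) = p := rfl

@[simp] theorem nil_comp {a b : K} (p : SPath K a b) : (SPath.nil a).comp p = p := by
  induction p with
  | nil => rfl
  | cons p s h1 h0 ih =>
      show SPath.cons ((SPath.nil _).comp p) s h1 h0 = _
      rw [ih]

theorem comp_assoc {a b c d : K} (p : SPath K a b) (q : SPath K b c) (r : SPath K c d) :
    (p.comp q).comp r = p.comp (q.comp r) := by
  induction r with
  | nil => rfl
  | cons r s h1 h0 ih =>
      show SPath.cons ((p.comp q).comp r) s h1 h0 = SPath.cons (p.comp (q.comp r)) s h1 h0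
      rw [ih]

/-- All 1-simplices of the path have support `≤ o`. -/
def SuppLE (o : K) {a : K} : {b : K} → SPath K a b → Prop
  | _, .nil _ => True
  | _, .cons p s _ _ => SuppLE o p ∧ s.supp ≤ o

/-- All supports and faces of the path belong to `P`. -/
def MemAll (P : Set K) {a : K} : {b : K} → SPath K a b → Prop
  | _, .nil _ => True
  | _, .cons p s _ _ => MemAll P p ∧ s.supp ∈ P ∧ s.d0 ∈ P ∧ s.d1 ∈ P

theorem SuppLE.comp {o : K} {a b c : K} {p : SPath K a b} {q : SPath K b c}
    (hp : SuppLE o p) (hq : SuppLE o q) : SuppLE o (p.comp q) := by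
  induction q with
  | nil => exact hp
  | cons q s h1 h0 ih => exact ⟨ih hq.1, hq.2⟩

theorem SuppLE.reverse {o : K} {a b : K} {p : SPath K a b} (hp : SuppLE o p) :
    SuppLE o p.reverse := by
  induction p with
  | nil => trivial
  | cons p s h1 h0 ih => exact SuppLE.comp ⟨trivial, hp.2⟩ (ih hp.1)

/-- Mapping paths along a monotone map. -/
def map {L : Type u'} [PartialOrder L] (f : K →o L) {a : K} :
    {b : K} → SPath K a b → SPath L (f a) (f b)
  | _, .nil _ => .nil (f a)
  | _, .cons p s h1 h0 => .cons (map f p) (s.map f) (congrArg f h1) (congrArg f h0)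

/-- The path of the nerve 1-simplex associated with an inclusion `o ≤ a`. -/
def nervePath {o a : K} (h : o ≤ a) : SPath K o a :=
  single ⟨a, a, o, le_rfl, h⟩ rfl rfl

/-! ### Homotopy of paths -/

inductive Homotopic : {a b : K} → SPath K a b → SPath K a b → Prop
  | refl {a b : K} (p : SPath K a b) : Homotopic p p
  | symm {a b : K} {p q : SPath K a b} : Homotopic p q → Homotopic q p
  | trans {a b : K} {p q r : SPath K a b} : Homotopic p q → Homotopic q r → Homotopic p r
  | comp_congr {a b c : K} {p p' : SPath K a b} {q q' : SPath K b c} :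
      Homotopic p p' → Homotopic q q' → Homotopic (p.comp q) (p'.comp q')
  | degen {a : K} (s : Simplex1 K) (h0 : s.d0 = a) (h1 : s.d1 = a) (hs : s.supp = a) :
      Homotopic (SPath.nil a) (single s h1 h0)
  | triangle {a b : K} (c : Simplex2 K) (h1 : c.d2.d1 = a) (h0 : c.d0.d0 = b) :
      Homotopic ((single c.d2 h1 rfl).comp (single c.d0 c.h10 h0))
        (single c.d1 (c.h11.trans h1) (c.h00.symm.trans h0))

theorem single_comp_op {a b : K} (s : Simplex1 K) (h1 : s.d1 = a) (h0 : s.d0 = b) :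
    Homotopic ((single s h1 h0).comp (single s.op h0 h1)) (SPath.nil a) := by
  subst h1; subst h0
  have ht := Homotopic.triangle
    (⟨s.supp, s.op, Simplex1.deg s.d1, s, le_rfl, s.le1, le_rfl, rfl, rfl, rfl⟩ : Simplex2 K)
    rfl rfl
  have hd := Homotopic.degen (K := K) (Simplex1.deg s.d1) rfl rfl rfl
  exact ht.trans hd.symm

theorem comp_reverse_self {a b : K} (p : SPath K a b) :
    Homotopic (p.comp p.reverse) (SPath.nil a) := by
  induction p with
  | nil => exact .refl _
  | cons p s h1 h0 ih =>
      show Homotopic ((p.comp (single s h1 h0)).comp ((single s.op h0 h1).comp p.reverse)) _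
      rw [comp_assoc, ← comp_assoc (single s h1 h0)]
      have h2 : Homotopic (((single s h1 h0).comp (single s.op h0 h1)).comp p.reverse)
          p.reverse := by
        have h3 := Homotopic.comp_congr (single_comp_op s h1 h0) (Homotopic.refl p.reverse)
        rwa [nil_comp] at h3
      exact (Homotopic.comp_congr (Homotopic.refl p) h2).trans ih

theorem reverse_comp_self {a b : K} (p : SPath K a b) :
    Homotopic (p.reverse.comp p) (SPath.nil b) := by
  induction p with
  | nil => exact .refl _
  | cons p s h1 h0 ih =>
      show Homotopic (((single s.op h0 h1).comp p.reverse).comp (p.comp (single s h1 h0))) _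
      rw [comp_assoc, ← comp_assoc p.reverse]
      have h2 : Homotopic ((p.reverse.comp p).comp (single s h1 h0)) (single s h1 h0) := by
        have h3 := Homotopic.comp_congr ih (Homotopic.refl (single s h1 h0))
        rwa [nil_comp] at h3
      have h4 : Homotopic ((single s.op h0 h1).comp ((p.reverse.comp p).comp (single s h1 h0)))
          ((single s.op h0 h1).comp (single s h1 h0)) :=
        Homotopic.comp_congr (Homotopic.refl _) h2
      exact h4.trans (single_comp_op s.op h0 h1)

theorem Homotopic.reverse_congr {a b : K} {p q : SPath K a b} (h : Homotopic p q) :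
    Homotopic p.reverse q.reverse := by
  have e1 : Homotopic p.reverse (p.reverse.comp (q.comp q.reverse)) :=
    Homotopic.comp_congr (Homotopic.refl p.reverse) (comp_reverse_self q).symm
  have e2 : Homotopic (p.reverse.comp (q.comp q.reverse)) ((p.reverse.comp p).comp q.reverse) := by
    rw [comp_assoc]
    exact Homotopic.comp_congr (Homotopic.refl _)
      (Homotopic.comp_congr h.symm (Homotopic.refl _))
  have e3 : Homotopic ((p.reverse.comp p).comp q.reverse) q.reverse := by
    have h3 := Homotopic.comp_congr (reverse_comp_self p) (Homotopic.refl q.reverse)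
    rwa [nil_comp] at h3
  exact (e1.trans e2).trans e3

end SPath

/-! ### The fundamental group of a poset -/

instance homotopySetoid (K : Type u) [PartialOrder K] (o : K) : Setoid (SPath K o o) where
  r := SPath.Homotopic
  iseqv := ⟨fun p => .refl p, fun h => h.symm, fun h h' => h.trans h'⟩

def Pi1 (K : Type u) [PartialOrder K] (o : K) : Type u := Quotient (homotopySetoid K o)

namespace Pi1

variable {K : Type u} [PartialOrder K] {o : K}

def mk (p : SPath K o o) : Pi1 K o := Quotient.mk _ p

instance : One (Pi1 K o) := ⟨mk (SPath.nil o)⟩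

instance : Mul (Pi1 K o) :=
  ⟨Quotient.map₂ (fun p q => q.comp p)
    (fun _ _ hp _ _ hq => SPath.Homotopic.comp_congr hq hp)⟩

instance : Inv (Pi1 K o) :=
  ⟨Quotient.map SPath.reverse (fun _ _ h => h.reverse_congr)⟩

instance : Group (Pi1 K o) where
  mul_assoc x y z := by
    refine Quotient.inductionOn₃ x y z ?_
    intro p q r
    show mk (r.comp (q.comp p)) = mk ((r.comp q).comp p)
    rw [SPath.comp_assoc]
  one_mul x := Quotient.inductionOn x fun p => rfl
  mul_one x := Quotient.inductionOn x fun p => congrArg mk (SPath.nil_comp p)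
  inv_mul_cancel x := Quotient.inductionOn x fun p => Quotient.sound (SPath.comp_reverse_self p)

end Pi1

/-! ### Nets of C*-algebras over a poset -/

open scoped ComplexOrder

variable {K : Type u} [PartialOrder K]

structure CStarNet (K : Type u) [PartialOrder K] where
  fib : K → Type v
  [cstar : ∀ o, CStarAlgebra (fib o)]
  incl : ∀ ⦃a o : K⦄, a ≤ o → (fib a →⋆ₐ[ℂ] fib o)
  incl_injective : ∀ ⦃a o : K⦄ (h : a ≤ o), Function.Injective (incl h)
  incl_comp : ∀ ⦃e a o : K⦄ (h1 : e ≤ a) (h2 : a ≤ o) (x : fib e),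
      incl h2 (incl h1 x) = incl (h1.trans h2) x

attribute [instance] CStarNet.cstar

/-- A C*-net bundle: all the inclusion maps are isomorphisms. -/
def IsCStarNetBundle (N : CStarNet.{u, v} K) : Prop :=
  ∀ ⦃a o : K⦄ (h : a ≤ o), Function.Bijective (N.incl h)

/-- Morphisms of nets over (possibly) different posets, over the poset map `f`. -/
def IsNetMorphism {K : Type u} {S : Type u'} [PartialOrder K] [PartialOrder S]
    (N : CStarNet.{u, v} K) (M : CStarNet.{u', v'} S) (f : K →o S)
    (φ : ∀ o : K, N.fib o →⋆ₐ[ℂ] M.fib (f o)) : Prop :=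
  ∀ ⦃a o : K⦄ (h : a ≤ o) (x : N.fib a), φ o (N.incl h x) = M.incl (f.monotone h) (φ a x)

/-- Morphisms of nets over the same poset (over the identity of the poset). -/
def IsNetMorphismOver (N : CStarNet.{u, v} K) (M : CStarNet.{u, v'} K)
    (φ : ∀ o : K, N.fib o →⋆ₐ[ℂ] M.fib o) : Prop :=
  ∀ ⦃a o : K⦄ (h : a ≤ o) (x : N.fib a), φ o (N.incl h x) = M.incl h (φ a x)

namespace CStarNet

def fibCast (N : CStarNet.{u, v} K) {a b : K} (h : a = b) : N.fib a ≃⋆ₐ[ℂ] N.fib b := by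
  subst h; exact StarAlgEquiv.refl ℂ _

/-- The isomorphism determined by an inclusion map of a C*-net bundle. -/
def holEquiv (N : CStarNet.{u, v} K) (hN : IsCStarNetBundle N) ⦃a o : K⦄ (h : a ≤ o) :
    N.fib a ≃⋆ₐ[ℂ] N.fib o :=
  StarAlgEquiv.ofBijective (N.incl h) (hN h)

/-- The 1-cocycle `j_b` associated with a 1-simplex `b` of the poset. -/
def hol1 (N : CStarNet.{u, v} K) (hN : IsCStarNetBundle N) (s : Simplex1 K) :
    N.fib s.d1 ≃⋆ₐ[ℂ] N.fib s.d0 :=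
  (N.holEquiv hN s.le1).trans (N.holEquiv hN s.le0).symm

/-- The extension `j_p` of the 1-cocycle from 1-simplices to paths. -/
def holPath (N : CStarNet.{u, v} K) (hN : IsCStarNetBundle N) {a : K} :
    {b : K} → SPath K a b → (N.fib a ≃⋆ₐ[ℂ] N.fib b)
  | _, .nil _ => StarAlgEquiv.refl ℂ _
  | _, .cons p s h1 h0 =>
      (holPath N hN p).trans (((N.fibCast h1.symm).trans (N.hol1 hN s)).trans (N.fibCast h0))

end CStarNet

/-- A net is trivial if it is isomorphic to a constant net bundle. -/
def IsTrivialNet (N : CStarNet.{u, v} K) : Prop :=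
  ∀ o₀ : K, ∃ τ : ∀ a, N.fib a ≃⋆ₐ[ℂ] N.fib o₀,
    ∀ ⦃a o : K⦄ (h : a ≤ o) (x : N.fib a), τ o (N.incl h x) = τ a x

/-- `(NB, ε)` is an enveloping net bundle of the net `N`. -/
def IsEnvelope (N : CStarNet.{u, v} K) (NB : CStarNet.{u, max u v} K)
    (ε : ∀ o, N.fib o →⋆ₐ[ℂ] NB.fib o) : Prop :=
  IsCStarNetBundle NB ∧ IsNetMorphismOver N NB ε ∧
    ∀ (M : CStarNet.{u, max u v} K), IsCStarNetBundle M →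
      ∀ ψ : ∀ o, N.fib o →⋆ₐ[ℂ] M.fib o, IsNetMorphismOver N M ψ →
        ∃! ψu : ∀ o, NB.fib o →⋆ₐ[ℂ] M.fib o,
          IsNetMorphismOver NB M ψu ∧ ∀ o x, ψu o (ε o x) = ψ o x

/-- The net `N` is nondegenerate w.r.t. the enveloping net bundle `NB`. -/
def IsNondegenerate (NB : CStarNet.{u, v'} K) : Prop :=
  ∀ o : K, Nontrivial (NB.fib o)

/-! ### States -/

/-- A state on a unital C*-algebra. -/
structure CStarAlgState (A : Type v) [CStarAlgebra A] where
  lin : A →ₗ[ℂ] ℂ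
  map_one : lin 1 = 1
  pos : ∀ a : A, 0 ≤ lin (star a * a)

/-- A state on a net of C*-algebras. -/
structure NetState (N : CStarNet.{u, v} K) where
  st : ∀ o, CStarAlgState (N.fib o)
  compat : ∀ ⦃o a : K⦄ (h : o ≤ a) (x : N.fib o), (st a).lin (N.incl h x) = (st o).lin x

/-! ### Representations -/

structure NetRep (N : CStarNet.{u, v} K) where
  H : K → Type w
  [nacg : ∀ o, NormedAddCommGroup (H o)]
  [ips : ∀ o, InnerProductSpace ℂ (H o)]
  [cpl : ∀ o, CompleteSpace (H o)]
  rep : ∀ o, N.fib o →⋆ₐ[ℂ] (H o →L[ℂ] H o)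
  U : ∀ ⦃o a : K⦄, o ≤ a → (H o ≃ₗᵢ[ℂ] H a)
  intertwine : ∀ ⦃o a : K⦄ (h : o ≤ a) (x : N.fib o) (v : H o),
      U h (rep o x v) = rep a (N.incl h x) (U h v)
  U_comp : ∀ ⦃o a e : K⦄ (h1 : o ≤ a) (h2 : a ≤ e) (v : H o),
      U h2 (U h1 v) = U (h1.trans h2) v

attribute [instance] NetRep.nacg NetRep.ips NetRep.cpl

namespace NetRep

variable {N : CStarNet.{u, v} K}

def hCast (R : NetRep.{u, v, w} N) {a b : K} (h : a = b) : R.H a ≃ₗᵢ[ℂ] R.H b := by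
  subst h; exact LinearIsometryEquiv.refl ℂ _

/-- The unitary `U_b` associated with a 1-simplex `b`. -/
def U1 (R : NetRep.{u, v, w} N) (s : Simplex1 K) : R.H s.d1 ≃ₗᵢ[ℂ] R.H s.d0 :=
  (R.U s.le1).trans (R.U s.le0).symm

/-- The unitary `U_p` associated with a path `p`. -/
def Upath (R : NetRep.{u, v, w} N) {a : K} : {b : K} → SPath K a b → (R.H a ≃ₗᵢ[ℂ] R.H b)
  | _, .nil _ => LinearIsometryEquiv.refl ℂ _
  | _, .cons p s h1 h0 =>
      (Upath R p).trans (((R.hCast h1.symm).trans (R.U1 s)).trans (R.hCast h0))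

/-- A representation is faithful if all the `π_o` are injective. -/
def Faithful (R : NetRep.{u, v, w} N) : Prop := ∀ o, Function.Injective (R.rep o)

/-- A representation vanishes if all the `π_o` are zero. -/
def Vanishes (R : NetRep.{u, v, w} N) : Prop := ∀ (o) (x : N.fib o), R.rep o x = 0

/-- Quasi (topologically) trivial representation: the loop unitaries commute with the
representation of the corresponding fibre. -/
def QuasiTrivial (R : NetRep.{u, v, w} N) : Prop :=
  ∀ (o : K) (p : SPath K o o) (x : N.fib o) (v : R.H o),
    R.Upath p (R.rep o x v) = R.rep o x (R.Upath p v)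

/-- Unitary equivalence of representations. -/
def Equiv (R : NetRep.{u, v, w} N) (R' : NetRep.{u, v, w'} N) : Prop :=
  ∃ T : ∀ o, R.H o ≃ₗᵢ[ℂ] R'.H o,
    (∀ (o) (x : N.fib o) (v : R.H o), T o (R.rep o x v) = R'.rep o x (T o v)) ∧
    (∀ ⦃o a : K⦄ (h : o ≤ a) (v : R.H o), T a (R.U h v) = R'.U h (T o v))

end NetRep

/-- The representation of `N` obtained by composing a representation of `NB` with
a morphism `ε : N → NB` of nets over `K`. -/
def NetRep.ofEnvelope {N : CStarNet.{u, v} K} {NB : CStarNet.{u, v'} K}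
    (ε : ∀ o, N.fib o →⋆ₐ[ℂ] NB.fib o) (hε : IsNetMorphismOver N NB ε)
    (R : NetRep.{u, v', w} NB) : NetRep.{u, v, w} N where
  H := R.H
  rep o := (R.rep o).comp (ε o)
  U := R.U
  intertwine := by
    intro o a h x v
    show R.U h (R.rep o (ε o x) v) = R.rep a (ε a (N.incl h x)) (R.U h v)
    rw [hε h x]
    exact R.intertwine h (ε o x) v
  U_comp := R.U_comp

/-- Covariant representations of the holonomy dynamical system of a C*-net bundle,
with the action of the fundamental group presented at the level of loops. -/
structure CovRep (N : CStarNet.{u, v} K) (hN : IsCStarNetBundle N) (o : K) where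
  H : Type w
  [nacg : NormedAddCommGroup H]
  [ips : InnerProductSpace ℂ H]
  [cpl : CompleteSpace H]
  eta : N.fib o →⋆ₐ[ℂ] (H →L[ℂ] H)
  V : SPath K o o → (H ≃ₗᵢ[ℂ] H)
  V_hom : ∀ p q : SPath K o o, SPath.Homotopic p q → V p = V q
  V_mul : ∀ p q : SPath K o o, V (p.comp q) = (V p).trans (V q)
  cov : ∀ (p : SPath K o o) (x : N.fib o) (v : H),
      eta (N.holPath hN p x) (V p v) = V p (eta x v)

attribute [instance] CovRep.nacg CovRep.ips CovRep.cpl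

/-- Equivalence of covariant representations. -/
def CovRep.Equiv {N : CStarNet.{u, v} K} {hN : IsCStarNetBundle N} {o : K}
    (C : CovRep.{u, v, w} N hN o) (C' : CovRep.{u, v, w'} N hN o) : Prop :=
  ∃ W : C.H ≃ₗᵢ[ℂ] C'.H,
    (∀ (x : N.fib o) (v : C.H), W (C.eta x v) = C'.eta x (W v)) ∧
    (∀ (p : SPath K o o) (v : C.H), W (C.V p v) = C'.V p (W v))

/-- A representation of a single C*-algebra on a Hilbert space. -/
structure AlgRep (A : Type v) [CStarAlgebra A] where
  H : Type w
  [nacg : NormedAddCommGroup H]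
  [ips : InnerProductSpace ℂ H]
  [cpl : CompleteSpace H]
  rho : A →⋆ₐ[ℂ] (H →L[ℂ] H)

attribute [instance] AlgRep.nacg AlgRep.ips AlgRep.cpl

/-- A Hilbert space representation (on a single Hilbert space) of the restriction of
a net of C*-algebras to a subset `P` of the poset. -/
structure SubNetHSRep (N : CStarNet.{u, v} K) (P : Set K) where
  H : Type w
  [nacg : NormedAddCommGroup H]
  [ips : InnerProductSpace ℂ H]
  [cpl : CompleteSpace H]
  rep : ∀ o ∈ P, N.fib o →⋆ₐ[ℂ] (H →L[ℂ] H)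
  compat : ∀ ⦃a o : K⦄ (ha : a ∈ P) (ho : o ∈ P) (h : a ≤ o) (x : N.fib a),
      rep o ho (N.incl h x) = rep a ha x

attribute [instance] SubNetHSRep.nacg SubNetHSRep.ips SubNetHSRep.cpl

/-! ### Amenability -/

/-- The space `ℓ∞(G)` of bounded real-valued functions on `G`. -/
def BddFuns (G : Type w) : Submodule ℝ (G → ℝ) where
  carrier := {f | ∃ C, ∀ g, |f g| ≤ C}
  add_mem' := by
    rintro f g ⟨C, hC⟩ ⟨D, hD⟩
    exact ⟨C + D, fun x => (abs_add_le _ _).trans (add_le_add (hC x) (hD x))⟩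
  zero_mem' := ⟨0, by simp⟩
  smul_mem' := by
    rintro c f ⟨C, hC⟩
    refine ⟨|c| * C, fun x => ?_⟩
    have : |c • f x| = |c| * |f x| := by simp [abs_mul]
    calc |(c • f) x| = |c| * |f x| := by simpa using this
      _ ≤ |c| * C := mul_le_mul_of_nonneg_left (hC x) (abs_nonneg c)

def BddFuns.const (G : Type w) (r : ℝ) : BddFuns G :=
  ⟨fun _ => r, ⟨|r|, fun _ => le_rfl⟩⟩

def BddFuns.rtrans {G : Type w} [Group G] (f : BddFuns G) (h : G) : BddFuns G :=
  ⟨fun g => (f : G → ℝ) (g * h), by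
    obtain ⟨C, hC⟩ := f.2
    exact ⟨C, fun g => hC (g * h)⟩⟩

/-- A right invariant mean on `ℓ∞(G)`. -/
structure RightInvariantMean (G : Type w) [Group G] where
  mean : BddFuns G →ₗ[ℝ] ℝ
  nonneg : ∀ f : BddFuns G, (∀ g, 0 ≤ (f : G → ℝ) g) → 0 ≤ mean f
  normalized : mean (BddFuns.const G 1) = 1
  rightInv : ∀ (f : BddFuns G) (h : G), mean (BddFuns.rtrans f h) = mean f

/-- Amenability of a (discrete) group. -/
def IsAmenable (G : Type w) [Group G] : Prop := Nonempty (RightInvariantMean G)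

/-! ### Covariant nets -/

/-- A `G`-covariant structure on a net of C*-algebras, where `G` acts on the poset `K`
by order preserving bijections. -/
structure CovariantNet {G : Type w} [Group G] [MulAction G K]
    (hord : ∀ (g : G) (a b : K), a ≤ b → g • a ≤ g • b) (N : CStarNet.{u, v} K) where
  act : ∀ (g : G) (o : K), N.fib o ≃⋆ₐ[ℂ] N.fib (g • o)
  act_mul : ∀ (g h : G) (o : K) (x : N.fib o),
      N.fibCast (mul_smul h g o) (act (h * g) o x) = act h (g • o) (act g o x)
  act_incl : ∀ (g : G) ⦃a o : K⦄ (hao : a ≤ o) (x : N.fib a),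
      act g o (N.incl hao x) = N.incl (hord g a o hao) (act g a x)

/-- A `G`-invariant state of a `G`-covariant net. -/
def NetState.Invariant {G : Type w} [Group G] [MulAction G K]
    {hord : ∀ (g : G) (a b : K), a ≤ b → g • a ≤ g • b} {N : CStarNet.{u, v} K}
    (α : CovariantNet hord N) (ω : NetState N) : Prop :=
  ∀ (g : G) (o : K) (x : N.fib o), (ω.st (g • o)).lin (α.act g o x) = (ω.st o).lin x

/-! ### The generalized Čech cocycle -/

/-- A 1-simplex of the simplicial set `Σ°_*(K)`: two vertices and a nonempty support
`F` lying below both of them. -/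
structure CechSimplex1 (K : Type u) [PartialOrder K] : Type u where
  F : Set K
  hne : F.Nonempty
  src : K
  tgt : K
  hsrc : ∀ a ∈ F, a ≤ src
  htgt : ∀ a ∈ F, a ≤ tgt

def CechSimplex1.swap (s : CechSimplex1 K) : CechSimplex1 K :=
  ⟨s.F, s.hne, s.tgt, s.src, s.htgt, s.hsrc⟩

/-- `A^F_o`: the C*-subalgebra of the fibre over `o` generated by the images of the
fibres over the elements of `F`. -/
def CStarNet.fibGen (N : CStarNet.{u, v} K) (F : Set K) (o : K) (hF : ∀ a ∈ F, a ≤ o) :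
    StarSubalgebra ℂ (N.fib o) :=
  (StarAlgebra.adjoin ℂ (⋃ a, ⋃ h : a ∈ F, Set.range (N.incl (hF a h)))).topologicalClosure

theorem CStarNet.mem_fibGen (N : CStarNet.{u, v} K) {F : Set K} {o : K}
    (hF : ∀ a ∈ F, a ≤ o) {a : K} (ha : a ∈ F) (x : N.fib a) :
    N.incl (hF a ha) x ∈ N.fibGen F o hF :=
  StarSubalgebra.le_topologicalClosure _
    (StarAlgebra.subset_adjoin ℂ _
      (Set.mem_iUnion.2 ⟨a, Set.mem_iUnion.2 ⟨ha, Set.mem_range_self x⟩⟩))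

/-- A generalized Čech cocycle of the net `N` defined over the collection `D` of
1-simplices of `Σ°_*(K)`. -/
structure CechCocycle (N : CStarNet.{u, v} K) (D : Set (CechSimplex1 K)) where
  zeta : ∀ s ∈ D, (N.fibGen s.F s.src s.hsrc ≃⋆ₐ[ℂ] N.fibGen s.F s.tgt s.htgt)
  compat : ∀ (s : CechSimplex1 K) (hs : s ∈ D) ⦃a : K⦄ (ha : a ∈ s.F) (x : N.fib a),
      (zeta s hs ⟨N.incl (s.hsrc a ha) x, N.mem_fibGen s.hsrc ha x⟩ : N.fib s.tgt)
        = N.incl (s.htgt a ha) x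

/-- The domain of the Čech cocycle of a net: the union of all the domains over which
a Čech cocycle of the net exists. -/
def CechDomain (N : CStarNet.{u, v} K) : Set (CechSimplex1 K) :=
  {s | ∃ D : Set (CechSimplex1 K), Nonempty (CechCocycle N D) ∧ s ∈ D}


/-- A representation of a C*-net bundle and a covariant representation of its holonomy
dynamical system correspond to each other. -/
def MatchesCov {N : CStarNet.{u, v} K} {hN : IsCStarNetBundle N} {o : K}
    (R : NetRep.{u, v, w} N) (C : CovRep.{u, v, w'} N hN o) : Prop :=
  ∃ W : R.H o ≃ₗᵢ[ℂ] C.H,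
    (∀ (x : N.fib o) (v : R.H o), W (R.rep o x v) = C.eta x (W v)) ∧
    (∀ (p : SPath K o o) (v : R.H o), W (R.Upath p v) = C.V p (W v))

/-! The inclusion isomorphisms of a net bundle and the unitaries of a representation are both
local systems over `K`: fibres with compatible isomorphisms along `≤`. Transport along paths
in a local system is invariant under homotopy and natural in morphisms of local systems, so
`j_p` and `U_p` only depend on the homotopy class of `p`, and `U_p` intertwines `π` with `j_p`
(naturality of `(x, v) ↦ π(x) v`). Conversely, a covariant representation `(η, V)` at `o`
spreads over `K` once a path `γ a` from `o` to every `a` is fixed: a path `q` from `a` to `b`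
acts by `V (γ a * q * (γ b)⁻¹)`, and the loop unitaries of the resulting representation are
conjugate to `V` by `V (γ o)`. In the same way a unitary at `o` intertwining the loop data
transports along the `γ a` to an equivalence of representations. -/

structure LocalSystem (K : Type u) [PartialOrder K] where
  fib : K → Type w
  map : ∀ ⦃a b : K⦄, a ≤ b → fib a ≃ fib b
  map_comp : ∀ ⦃a b c : K⦄ (h₁ : a ≤ b) (h₂ : b ≤ c) (x : fib a),
    map h₂ (map h₁ x) = map (h₁.trans h₂) x

namespace LocalSystem

variable (L : LocalSystem.{u, w} K)

def transport1 (s : Simplex1 K) : L.fib s.d1 ≃ L.fib s.d0 :=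
  (L.map s.le1).trans (L.map s.le0).symm

def transport {a : K} : {b : K} → SPath K a b → (L.fib a ≃ L.fib b)
  | _, .nil _ => Equiv.refl _
  | _, .cons p s h1 h0 =>
      (transport p).trans
        (((Equiv.cast (congrArg L.fib h1.symm)).trans (L.transport1 s)).trans
          (Equiv.cast (congrArg L.fib h0)))

theorem transport_cons {a : K} (s : Simplex1 K) (p : SPath K a s.d1) (x : L.fib a) :
    L.transport (.cons p s rfl rfl) x = L.transport1 s (L.transport p x) := rfl

theorem transport1_eq_iff {s : Simplex1 K} {c : K} (hc : s.supp ≤ c) (x : L.fib s.d1)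
    (y : L.fib s.d0) :
    L.transport1 s x = y ↔ L.map (s.le1.trans hc) x = L.map (s.le0.trans hc) y := by
  rw [transport1, Equiv.trans_apply, Equiv.symm_apply_eq, ← L.map_comp s.le1 hc,
    ← L.map_comp s.le0 hc]
  exact (L.map hc).injective.eq_iff.symm

theorem transport_comp {a b c : K} (p : SPath K a b) (q : SPath K b c) (x : L.fib a) :
    L.transport (p.comp q) x = L.transport q (L.transport p x) := by
  induction q with
  | nil => rfl
  | cons q s h1 h0 ih =>
    subst h1 h0
    exact congrArg (L.transport1 s) ih

theorem transport_nervePath {a b : K} (h : a ≤ b) (x : L.fib a) :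
    L.transport (SPath.nervePath h) x = L.map h x :=
  (L.transport1_eq_iff (s := ⟨b, b, a, le_rfl, h⟩) le_rfl x _).2
    (L.map_comp h le_rfl x).symm

theorem transport_homotopic {a b : K} {p q : SPath K a b} (h : SPath.Homotopic p q)
    (x : L.fib a) : L.transport p x = L.transport q x := by
  induction h with
  | refl => rfl
  | symm _ ih => exact (ih x).symm
  | trans _ _ ih₁ ih₂ => exact (ih₁ x).trans (ih₂ x)
  | comp_congr _ _ ih₁ ih₂ => rw [transport_comp, transport_comp, ih₁, ih₂]
  | degen s h0 h1 hs =>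
    obtain ⟨supp, d0, d1, l0, l1⟩ := s
    dsimp only at h0 h1 hs
    subst h0 h1 hs
    show x = L.transport1 ⟨_, _, _, l0, l1⟩ x
    exact ((L.transport1_eq_iff (s := ⟨_, _, _, l0, l1⟩) le_rfl x x).2 rfl).symm
  | triangle c h1 h0 =>
    obtain ⟨supp, ⟨s0, _, _, q00, q01⟩, ⟨s1, _, _, q10, q11⟩, ⟨s2, _, _, q20, q21⟩,
      le0, le1, le2, h00, h11, h10⟩ := c
    dsimp only at h00 h11 h10 h1 h0
    subst h00 h11 h10 h1 h0
    rw [transport_comp]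
    show L.transport1 ⟨s0, _, _, q00, q01⟩ (L.transport1 ⟨s2, _, _, q20, q21⟩ x)
      = L.transport1 ⟨s1, _, _, q10, q11⟩ x
    have h₂ := (L.transport1_eq_iff le2 x _).1 rfl
    have h₀ := (L.transport1_eq_iff le0 (L.transport1 ⟨s2, _, _, q20, q21⟩ x) _).1 rfl
    exact ((L.transport1_eq_iff le1 x _).2 (h₂.trans h₀)).symm

theorem transport_reverse {a b : K} (p : SPath K a b) (y : L.fib b) :
    L.transport p.reverse y = (L.transport p).symm y := by
  rw [Equiv.eq_symm_apply, ← transport_comp]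
  exact L.transport_homotopic (SPath.reverse_comp_self p) y

theorem transport_naturality {M : LocalSystem.{u, w'} K} (T : ∀ a, L.fib a → M.fib a)
    (hT : ∀ ⦃a b : K⦄ (h : a ≤ b) (x : L.fib a), T b (L.map h x) = M.map h (T a x))
    {a b : K} (p : SPath K a b) (x : L.fib a) :
    T b (L.transport p x) = M.transport p (T a x) := by
  induction p with
  | nil => rfl
  | cons p s h1 h0 ih =>
    subst h1 h0
    rw [transport_cons, transport_cons, ← ih, transport1, transport1, Equiv.trans_apply,
      Equiv.trans_apply, ← hT, Equiv.eq_symm_apply, ← hT, Equiv.apply_symm_apply]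

def prod (M : LocalSystem.{u, w'} K) : LocalSystem.{u, max w w'} K where
  fib a := L.fib a × M.fib a
  map _ _ h := (L.map h).prodCongr (M.map h)
  map_comp _ _ _ h₁ h₂ x := Prod.ext (L.map_comp h₁ h₂ x.1) (M.map_comp h₁ h₂ x.2)

theorem transport_prod (M : LocalSystem.{u, w'} K) {a b : K} (p : SPath K a b)
    (x : (L.prod M).fib a) :
    (L.prod M).transport p x = (L.transport p x.1, M.transport p x.2) :=
  Prod.ext ((L.prod M).transport_naturality (fun _ => Prod.fst) (fun _ _ _ _ => rfl) p x)
    ((L.prod M).transport_naturality (fun _ => Prod.snd) (fun _ _ _ _ => rfl) p x)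

end LocalSystem

namespace CStarNet

variable (N : CStarNet.{u, v} K) (hN : IsCStarNetBundle N)

abbrev localSystem : LocalSystem.{u, v} K where
  fib := N.fib
  map _ _ h := N.holEquiv hN h
  map_comp := N.incl_comp

theorem holPath_eq_transport {a b : K} (p : SPath K a b) (x : N.fib a) :
    N.holPath hN p x = (N.localSystem hN).transport p x := by
  induction p with
  | nil => rfl
  | cons p s h1 h0 ih =>
    subst h1 h0
    exact congrArg (N.hol1 hN s) ih

theorem holPath_comp {a b c : K} (p : SPath K a b) (q : SPath K b c) (x : N.fib a) :
    N.holPath hN (p.comp q) x = N.holPath hN q (N.holPath hN p x) := by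
  simp only [holPath_eq_transport]
  exact (N.localSystem hN).transport_comp p q x

theorem holPath_apply_holPath_reverse {a b : K} (p : SPath K a b) (x : N.fib b) :
    N.holPath hN p (N.holPath hN p.reverse x) = x := by
  rw [holPath_eq_transport, holPath_eq_transport, LocalSystem.transport_reverse]
  exact Equiv.apply_symm_apply _ x

theorem holPath_nervePath {a b : K} (h : a ≤ b) (x : N.fib a) :
    N.holPath hN (SPath.nervePath h) x = N.incl h x := by
  rw [holPath_eq_transport, LocalSystem.transport_nervePath]
  rfl

end CStarNet

namespace NetRep

variable {N : CStarNet.{u, v} K} (R : NetRep.{u, v, w} N)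

abbrev localSystem : LocalSystem.{u, w} K where
  fib := R.H
  map _ _ h := R.U h
  map_comp := R.U_comp

theorem Upath_eq_transport {a b : K} (p : SPath K a b) (x : R.H a) :
    R.Upath p x = R.localSystem.transport p x := by
  induction p with
  | nil => rfl
  | cons p s h1 h0 ih =>
    subst h1 h0
    exact congrArg (R.U1 s) ih

theorem Upath_comp {a b c : K} (p : SPath K a b) (q : SPath K b c) (x : R.H a) :
    R.Upath (p.comp q) x = R.Upath q (R.Upath p x) := by
  simp only [Upath_eq_transport]
  exact R.localSystem.transport_comp p q x

theorem Upath_reverse {a b : K} (p : SPath K a b) (x : R.H b) :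
    R.Upath p.reverse x = (R.Upath p).symm x := by
  rw [LinearIsometryEquiv.eq_symm_apply, Upath_eq_transport, Upath_eq_transport,
    LocalSystem.transport_reverse]
  exact Equiv.apply_symm_apply _ x

theorem Upath_homotopic {a b : K} {p q : SPath K a b} (h : SPath.Homotopic p q) (x : R.H a) :
    R.Upath p x = R.Upath q x := by
  simp only [Upath_eq_transport, R.localSystem.transport_homotopic h]

theorem Upath_nervePath {a b : K} (h : a ≤ b) (x : R.H a) :
    R.Upath (SPath.nervePath h) x = R.U h x := by
  rw [Upath_eq_transport, LocalSystem.transport_nervePath]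
  rfl

theorem Upath_rep (hN : IsCStarNetBundle N) {a b : K} (p : SPath K a b) (x : N.fib a)
    (v : R.H a) : R.Upath p (R.rep a x v) = R.rep b (N.holPath hN p x) (R.Upath p v) := by
  have key := ((N.localSystem hN).prod R.localSystem).transport_naturality
    (M := R.localSystem) (fun a xv => R.rep a xv.1 xv.2)
    (fun _ _ h xv => (R.intertwine h xv.1 xv.2).symm) p (x, v)
  rw [(N.localSystem hN).transport_prod R.localSystem p (x, v)] at key
  simp only [Upath_eq_transport, CStarNet.holPath_eq_transport]
  exact key.symm

theorem Upath_naturality {R' : NetRep.{u, v, w'} N} (T : ∀ a, R.H a ≃ₗᵢ[ℂ] R'.H a)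
    (hT : ∀ ⦃a b : K⦄ (h : a ≤ b) (v : R.H a), T b (R.U h v) = R'.U h (T a v))
    {a b : K} (p : SPath K a b) (v : R.H a) : T b (R.Upath p v) = R'.Upath p (T a v) := by
  simp only [Upath_eq_transport]
  exact R.localSystem.transport_naturality (M := R'.localSystem) (fun a => T a) hT p v

def toCovRep (hN : IsCStarNetBundle N) (o : K) : CovRep.{u, v, w} N hN o where
  H := R.H o
  eta := R.rep o
  V p := R.Upath p
  V_hom _ _ h := LinearIsometryEquiv.ext (R.Upath_homotopic h)
  V_mul p q := LinearIsometryEquiv.ext (R.Upath_comp p q)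
  cov p x v := (R.Upath_rep hN p x v).symm

end NetRep

theorem matchesCov_iff {N : CStarNet.{u, v} K} {hN : IsCStarNetBundle N} {o : K}
    (R : NetRep.{u, v, w} N) (C : CovRep.{u, v, w'} N hN o) :
    MatchesCov R C ↔ (R.toCovRep hN o).Equiv C :=
  Iff.rfl

namespace SPath

theorem comp_reverse_comp_cancel {a b c d : K} (q : SPath K a b) (p : SPath K c b)
    (r : SPath K b d) : Homotopic ((q.comp p.reverse).comp (p.comp r)) (q.comp r) := by
  rw [comp_assoc, ← comp_assoc p.reverse]
  refine Homotopic.comp_congr (.refl q) ?_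
  simpa only [nil_comp] using Homotopic.comp_congr (reverse_comp_self p) (.refl r)

theorem comp_reverse_comp_self {a b c : K} (q : SPath K a b) (p : SPath K c b) :
    Homotopic ((q.comp p.reverse).comp p) q :=
  comp_reverse_comp_cancel q p (.nil b)

theorem nervePath_comp_nervePath {a b c : K} (h₁ : a ≤ b) (h₂ : b ≤ c) :
    Homotopic ((nervePath h₁).comp (nervePath h₂)) (nervePath (h₁.trans h₂)) :=
  Homotopic.triangle
    ⟨c, ⟨c, c, b, le_rfl, h₂⟩, ⟨c, c, a, le_rfl, h₁.trans h₂⟩,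
      ⟨b, b, a, le_rfl, h₁⟩, le_rfl, le_rfl, h₂, rfl, rfl, rfl⟩ rfl rfl

theorem nervePath_comp_reverse_nervePath (s : Simplex1 K) :
    Homotopic ((nervePath s.le1).comp (nervePath s.le0).reverse) (single s rfl rfl) :=
  Homotopic.triangle
    ⟨s.supp, ⟨s.supp, s.d0, s.supp, s.le0, le_rfl⟩, s,
      ⟨s.supp, s.supp, s.d1, le_rfl, s.le1⟩, le_rfl, le_rfl, le_rfl, rfl, rfl, rfl⟩ rfl rfl

end SPath

namespace CovRep

open SPath

variable {N : CStarNet.{u, v} K} {hN : IsCStarNetBundle N} {o : K}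

section

variable (C : CovRep.{u, v, w} N hN o)

theorem V_comp (p q : SPath K o o) (v : C.H) : C.V (p.comp q) v = C.V q (C.V p v) := by
  rw [C.V_mul]
  rfl

theorem V_nil (v : C.H) : C.V (.nil o) v = v :=
  (C.V (.nil o)).injective (C.V_comp (.nil o) (.nil o) v).symm

variable (γ : ∀ a, SPath K o a)

def Vpath {a b : K} (q : SPath K a b) : C.H ≃ₗᵢ[ℂ] C.H :=
  C.V ((γ a).comp (q.comp (γ b).reverse))

theorem Vpath_nil (a : K) (v : C.H) : C.Vpath γ (.nil a) v = v := by
  rw [Vpath, nil_comp, C.V_hom _ _ (comp_reverse_self (γ a)), V_nil]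

theorem Vpath_comp {a b c : K} (q : SPath K a b) (r : SPath K b c) (v : C.H) :
    C.Vpath γ (q.comp r) v = C.Vpath γ r (C.Vpath γ q v) := by
  have h : Homotopic
      (((γ a).comp (q.comp (γ b).reverse)).comp ((γ b).comp (r.comp (γ c).reverse)))
      ((γ a).comp ((q.comp r).comp (γ c).reverse)) := by
    simpa only [comp_assoc] using
      comp_reverse_comp_cancel ((γ a).comp q) (γ b) (r.comp (γ c).reverse)
  rw [Vpath, Vpath, Vpath, ← V_comp, C.V_hom _ _ h]

theorem Vpath_homotopic {a b : K} {q q' : SPath K a b} (h : Homotopic q q') :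
    C.Vpath γ q = C.Vpath γ q' :=
  C.V_hom _ _ (.comp_congr (.refl _) (.comp_congr h (.refl _)))

theorem Vpath_reverse {a b : K} (q : SPath K a b) (v : C.H) :
    C.Vpath γ q.reverse v = (C.Vpath γ q).symm v := by
  rw [LinearIsometryEquiv.eq_symm_apply, ← Vpath_comp,
    Vpath_homotopic C γ (reverse_comp_self q), Vpath_nil]

def toNetRep : NetRep.{u, v, w} N where
  H _ := C.H
  rep a := C.eta.comp (N.holPath hN (γ a).reverse : N.fib a →⋆ₐ[ℂ] N.fib o)
  U _ _ h := C.Vpath γ (nervePath h)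
  intertwine a b h x v := by
    show C.Vpath γ (nervePath h) (C.eta (N.holPath hN (γ a).reverse x) v)
      = C.eta (N.holPath hN (γ b).reverse (N.incl h x)) (C.Vpath γ (nervePath h) v)
    rw [Vpath, ← C.cov, N.holPath_comp, N.holPath_apply_holPath_reverse, N.holPath_comp,
      N.holPath_nervePath]
  U_comp a b c h₁ h₂ v := by
    show C.Vpath γ (nervePath h₂) (C.Vpath γ (nervePath h₁) v) = C.Vpath γ (nervePath _) v
    rw [← Vpath_comp, Vpath_homotopic C γ (nervePath_comp_nervePath h₁ h₂)]

theorem toNetRep_Upath {a b : K} (p : SPath K a b) (v : C.H) :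
    (C.toNetRep γ).Upath p v = C.Vpath γ p v := by
  induction p with
  | nil => exact (C.Vpath_nil γ _ v).symm
  | cons p s h1 h0 ih =>
    subst h1 h0
    show (C.Vpath γ (nervePath s.le0)).symm
        (C.Vpath γ (nervePath s.le1) ((C.toNetRep γ).Upath p v))
      = C.Vpath γ (p.comp (single s rfl rfl)) v
    rw [ih, ← Vpath_reverse, ← Vpath_comp, ← Vpath_comp,
      Vpath_homotopic C γ (.comp_congr (.refl p) (nervePath_comp_reverse_nervePath s))]

theorem toCovRep_toNetRep_equiv : ((C.toNetRep γ).toCovRep hN o).Equiv C := by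
  refine ⟨C.V (γ o), fun x (v : C.H) => ?_, fun p (v : C.H) => ?_⟩
  · show C.V (γ o) (C.eta (N.holPath hN (γ o).reverse x) v) = C.eta x (C.V (γ o) v)
    rw [← C.cov, N.holPath_apply_holPath_reverse]
  · show C.V (γ o) ((C.toNetRep γ).Upath p v) = C.V p (C.V (γ o) v)
    have h : Homotopic (((γ o).comp (p.comp (γ o).reverse)).comp (γ o)) ((γ o).comp p) := by
      simpa only [comp_assoc] using comp_reverse_comp_self ((γ o).comp p) (γ o)
    rw [toNetRep_Upath, Vpath, ← V_comp, ← V_comp, C.V_hom _ _ h]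

end

theorem Equiv.refl (C : CovRep.{u, v, w} N hN o) : C.Equiv C :=
  ⟨LinearIsometryEquiv.refl ℂ _, fun _ _ => rfl, fun _ _ => rfl⟩

theorem Equiv.symm {C : CovRep.{u, v, w} N hN o} {C' : CovRep.{u, v, w'} N hN o}
    (h : C.Equiv C') : C'.Equiv C := by
  obtain ⟨W, hη, hV⟩ := h
  refine ⟨W.symm, fun x v => ?_, fun p v => ?_⟩
  · rw [LinearIsometryEquiv.symm_apply_eq, hη, LinearIsometryEquiv.apply_symm_apply]
  · rw [LinearIsometryEquiv.symm_apply_eq, hV, LinearIsometryEquiv.apply_symm_apply]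

theorem Equiv.trans {C : CovRep.{u, v, w} N hN o} {C' : CovRep.{u, v, w'} N hN o}
    {C'' : CovRep.{u, v, w''} N hN o} (h : C.Equiv C') (h' : C'.Equiv C'') : C.Equiv C'' := by
  obtain ⟨W, hη, hV⟩ := h
  obtain ⟨W', hη', hV'⟩ := h'
  exact ⟨W.trans W', fun x v => by simp only [LinearIsometryEquiv.trans_apply, hη, hη'],
    fun p v => by simp only [LinearIsometryEquiv.trans_apply, hV, hV']⟩

end CovRep

namespace NetRep

open SPath

variable {N : CStarNet.{u, v} K} {o : K}

/-- `W` is carried to `a` along `γ a`; these intertwine `U h` because `W` intertwines the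
unitary of the loop `γ a * h * (γ b)⁻¹`. -/
theorem equiv_of_intertwines_loops (hN : IsCStarNetBundle N) (γ : ∀ a, SPath K o a)
    {R : NetRep.{u, v, w} N} {R' : NetRep.{u, v, w'} N} (W : R.H o ≃ₗᵢ[ℂ] R'.H o)
    (hrep : ∀ x v, W (R.rep o x v) = R'.rep o x (W v))
    (hV : ∀ p v, W (R.Upath p v) = R'.Upath p (W v)) : R.Equiv R' := by
  refine ⟨fun a => (R.Upath (γ a)).symm.trans (W.trans (R'.Upath (γ a))), fun a x v => ?_,
    fun a b h v => ?_⟩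
  · show R'.Upath (γ a) (W ((R.Upath (γ a)).symm (R.rep a x v)))
      = R'.rep a x (R'.Upath (γ a) (W ((R.Upath (γ a)).symm v)))
    rw [← Upath_reverse, ← Upath_reverse, R.Upath_rep hN, hrep, R'.Upath_rep hN,
      N.holPath_apply_holPath_reverse]
  · obtain ⟨u, rfl⟩ := (R.Upath (γ a)).surjective v
    show R'.Upath (γ b) (W ((R.Upath (γ b)).symm (R.U h (R.Upath (γ a) u))))
      = R'.U h (R'.Upath (γ a) (W ((R.Upath (γ a)).symm (R.Upath (γ a) u))))
    rw [LinearIsometryEquiv.symm_apply_apply, ← Upath_reverse, ← Upath_nervePath,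
      ← Upath_comp, ← Upath_comp, hV, ← Upath_comp, ← R'.Upath_nervePath, ← Upath_comp]
    exact R'.Upath_homotopic (by
      simpa only [comp_assoc] using comp_reverse_comp_self ((γ a).comp (nervePath h)) (γ b)) _

theorem equiv_iff_toCovRep_equiv (hN : IsCStarNetBundle N) (γ : ∀ a, SPath K o a)
    (R : NetRep.{u, v, w} N) (R' : NetRep.{u, v, w'} N) :
    R.Equiv R' ↔ (R.toCovRep hN o).Equiv (R'.toCovRep hN o) :=
  ⟨fun ⟨T, hrep, hU⟩ => ⟨T o, hrep o, R.Upath_naturality T hU⟩,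
    fun ⟨W, hrep, hV⟩ => equiv_of_intertwines_loops hN γ W hrep hV⟩

end NetRep

/-- representations of a C*-net bundle correspond, up to unitary
equivalence, to covariant representations of its holonomy dynamical system. -/
theorem statement_11 {K : Type u} [PartialOrder K]
    (hconn : ∀ a b : K, Nonempty (SPath K a b)) (o : K)
    (N : CStarNet.{u, v} K) (hN : IsCStarNetBundle N) :
    (∀ R : NetRep.{u, v, w} N, ∃ C : CovRep.{u, v, w} N hN o, MatchesCov R C) ∧
    (∀ C : CovRep.{u, v, w} N hN o, ∃ R : NetRep.{u, v, w} N, MatchesCov R C) ∧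
    (∀ (R R' : NetRep.{u, v, w} N) (C C' : CovRep.{u, v, w} N hN o),
        MatchesCov R C → MatchesCov R' C' →
        (NetRep.Equiv R R' ↔ CovRep.Equiv C C')) := by
  let γ : ∀ a, SPath K o a := fun a => (hconn o a).some
  simp only [matchesCov_iff]
  refine ⟨fun R => ⟨R.toCovRep hN o, .refl _⟩,
    fun C => ⟨C.toNetRep γ, C.toCovRep_toNetRep_equiv γ⟩, fun R R' C C' hRC hR'C' => ?_⟩
  rw [NetRep.equiv_iff_toCovRep_equiv hN γ]
  exact ⟨fun h => hRC.symm.trans (h.trans hR'C'), fun h => hRC.trans (h.trans hR'C'.symm)⟩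

end AQFT
end
end

section
/- Let (A,j)_K be a net of C*-algebras over a poset K and let P ⊆ K be pathwise connected and such that the restricted net (A,j)_P admits a faithful Hilbert space representation. Then Σ°_*(P) is contained in the domain of the Čech cocycle of (A,j)_K. -/
noncomputable section

universe u v w u' v' w' u'' v'' w''

/-! A faithful representation `π` of the restricted net is isometric on every fibre, so it maps
`A^F_o` onto the C*-algebra on `H` generated by the `π_a(A_a)`, `a ∈ F`, whatever the vertex
`o ∈ P` above `F` is. Hence `ζ^F_{õo} := π_õ⁻¹ ∘ π_o` is a *-isomorphism `A^F_o → A^F_õ`, and it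
fixes each `j_{oa}(A_a)` because `π_o ∘ j_{oa} = π_a`. -/

namespace StarSubalgebra

variable {R A B C : Type*} [CommSemiring R] [StarRing R]
  [Semiring A] [Algebra R A] [StarRing A] [StarModule R A]
  [Semiring B] [Algebra R B] [StarRing B] [StarModule R B]
  [Semiring C] [Algebra R C] [StarRing C] [StarModule R C]

def equivOfMapEq (S : StarSubalgebra R A) {U : StarSubalgebra R B}
    (f : A →⋆ₐ[R] B) (hf : Function.Injective f) (h : S.map f = U) : S ≃⋆ₐ[R] U :=
  StarAlgEquiv.ofBijective ((f.comp S.subtype).codRestrict U fun x => h ▸ ⟨x, x.2, rfl⟩)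
    ⟨(StarAlgHom.injective_codRestrict _ _ _).2 (hf.comp Subtype.val_injective), by
      rintro ⟨_, h'⟩
      obtain ⟨x, hx, rfl⟩ := h ▸ h'
      exact ⟨⟨x, hx⟩, rfl⟩⟩

@[simp]
theorem coe_equivOfMapEq_apply (S : StarSubalgebra R A) {U : StarSubalgebra R B}
    (f : A →⋆ₐ[R] B) (hf : Function.Injective f) (h : S.map f = U) (x : S) :
    (S.equivOfMapEq f hf h x : B) = f x :=
  rfl

theorem map_equivOfMapEq_trans_symm_apply {S : StarSubalgebra R A} {T : StarSubalgebra R B}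
    {U : StarSubalgebra R C} {f : A →⋆ₐ[R] C} {g : B →⋆ₐ[R] C} (hf : Function.Injective f)
    (hg : Function.Injective g) (hS : S.map f = U) (hT : T.map g = U) (x : S) :
    g ((S.equivOfMapEq f hf hS).trans (T.equivOfMapEq g hg hT).symm x) = f x := by
  rw [← coe_equivOfMapEq_apply T g hg hT, StarAlgEquiv.trans_apply,
    StarAlgEquiv.apply_symm_apply, coe_equivOfMapEq_apply]

theorem map_topologicalClosure_of_injective {A B : Type*} [CStarAlgebra A] [CStarAlgebra B]
    (S : StarSubalgebra ℂ A) (f : A →⋆ₐ[ℂ] B) (hf : Function.Injective f) :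
    S.topologicalClosure.map f = (S.map f).topologicalClosure :=
  have hf' := (NonUnitalStarAlgHom.isometry f hf).isClosedEmbedding
  (topologicalClosure_map S f hf'.isClosedMap hf'.continuous).symm

end StarSubalgebra

namespace AQFT

namespace SubNetHSRep

variable {K : Type u} [PartialOrder K] {N : CStarNet.{u, v} K} {P : Set K}
  (R : SubNetHSRep.{u, v, w} N P)

def fibGen (F : Set K) (hFP : F ⊆ P) : StarSubalgebra ℂ (R.H →L[ℂ] R.H) :=
  (StarAlgebra.adjoin ℂ (⋃ a, ⋃ h : a ∈ F, Set.range (R.rep a (hFP h)))).topologicalClosure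

theorem map_fibGen {F : Set K} (hFP : F ⊆ P) {o : K} (ho : o ∈ P) (hF : ∀ a ∈ F, a ≤ o)
    (hinj : Function.Injective (R.rep o ho)) :
    (N.fibGen F o hF).map (R.rep o ho) = R.fibGen F hFP := by
  have hrange : ∀ a (h : a ∈ F), R.rep o ho '' Set.range (N.incl (hF a h)) =
      Set.range (R.rep a (hFP h)) := fun a h => by
    rw [← Set.range_comp]
    exact congrArg Set.range (funext (R.compat (hFP h) ho (hF a h)))
  rw [CStarNet.fibGen, StarSubalgebra.map_topologicalClosure_of_injective _ _ hinj,
    StarAlgHom.map_adjoin, Set.image_iUnion₂, Set.iUnion₂_congr hrange]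
  rfl

def cechCocycle (hfaith : ∀ (o : K) (ho : o ∈ P), Function.Injective (R.rep o ho)) :
    CechCocycle N {s : CechSimplex1 K | s.F ⊆ P ∧ s.src ∈ P ∧ s.tgt ∈ P} where
  zeta s hs :=
    (StarSubalgebra.equivOfMapEq _ _ (hfaith _ hs.2.1) (R.map_fibGen hs.1 hs.2.1 s.hsrc
      (hfaith _ hs.2.1))).trans
    (StarSubalgebra.equivOfMapEq _ _ (hfaith _ hs.2.2) (R.map_fibGen hs.1 hs.2.2 s.htgt
      (hfaith _ hs.2.2))).symm
  compat s hs a ha x := by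
    apply hfaith _ hs.2.2
    rw [StarSubalgebra.map_equivOfMapEq_trans_symm_apply, R.compat (hs.1 ha) hs.2.1,
      R.compat (hs.1 ha) hs.2.2]

end SubNetHSRep

theorem statement_18_general {K : Type u} [PartialOrder K] (N : CStarNet.{u, v} K) (P : Set K)
    (R : SubNetHSRep.{u, v, w} N P)
    (hfaith : ∀ (o : K) (ho : o ∈ P), Function.Injective (R.rep o ho)) :
    {s : CechSimplex1 K | s.F ⊆ P ∧ s.src ∈ P ∧ s.tgt ∈ P} ⊆ CechDomain N :=
  fun _ hs => ⟨_, ⟨R.cechCocycle hfaith⟩, hs⟩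

/-- if `P ⊆ K` is pathwise connected and the restriction of the net to
`P` admits a faithful Hilbert space representation, then `Σ°_*(P)` is contained in the
domain of the Čech cocycle of the net. -/
theorem statement_18 {K : Type u} [PartialOrder K] (N : CStarNet.{u, v} K) (P : Set K)
    (hP : ∀ a ∈ P, ∀ b ∈ P, ∃ p : SPath K a b, SPath.MemAll P p)
    (R : SubNetHSRep.{u, v, w} N P)
    (hfaith : ∀ (o : K) (ho : o ∈ P), Function.Injective (R.rep o ho)) :
    {s : CechSimplex1 K | s.F ⊆ P ∧ s.src ∈ P ∧ s.tgt ∈ P} ⊆ CechDomain N :=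
  statement_18_general N P R hfaith

end AQFT
end
end

section
/- Let I(S¹) be the poset of nonempty open connected intervals of the unit circle S¹ whose closure is not all of S¹, ordered by inclusion. Then every C*-net bundle over I(S¹) whose Čech cocycle is globally defined is trivial, i.e. isomorphic to a constant net bundle. -/
noncomputable section

universe u v w u' v' w' u'' v'' w''

namespace AQFT

/-! ### Nets of C*-algebras over a poset -/

open scoped ComplexOrder

variable {K : Type u} [PartialOrder K]

/-- The poset of nonempty open connected intervals of the circle `S¹ = ℝ/ℤ` whose
closure is not all of the circle, ordered by inclusion. -/
abbrev CircleIntervals : Type :=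
  {I : Set (AddCircle (1 : ℝ)) // IsOpen I ∧ IsConnected I ∧ closure I ≠ Set.univ}


/-! The Čech cocycle on the 1-simplex `({a, b}; o', o)` fixes the images of `A_a` and `A_b`,
so two elements identified in one common upper bound of `a` and `b` are identified in every
other one. For a net bundle this makes the identification `A_a ≅ A_b` through a common upper
bound independent of that bound. On the circle, every interval contains a short arc and any
three short arcs lie in a common interval, which is enough to glue these identifications
consistently into a trivialisation. -/

namespace CStarNet

variable {K : Type u} [PartialOrder K] (N : CStarNet.{u, v} K)

theorem incl_eq_incl_of_cechDomain_eq_univ (hglob : CechDomain N = Set.univ)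
    {a b o o' : K} (hao : a ≤ o) (hbo : b ≤ o) (hao' : a ≤ o') (hbo' : b ≤ o')
    {x : N.fib a} {y : N.fib b} (hxy : N.incl hao x = N.incl hbo y) :
    N.incl hao' x = N.incl hbo' y := by
  let s : CechSimplex1 K := ⟨{a, b}, Set.insert_nonempty a {b}, o, o',
    fun c hc => by rcases hc with rfl | rfl <;> assumption,
    fun c hc => by rcases hc with rfl | rfl <;> assumption⟩
  obtain ⟨D, ⟨ζ⟩, hsD⟩ : s ∈ CechDomain N := hglob ▸ Set.mem_univ s
  have hx := ζ.compat s hsD (Set.mem_insert a {b}) x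
  have hy := ζ.compat s hsD (Set.mem_insert_of_mem a rfl) y
  rw [← hx, ← hy]
  exact congrArg _ (congrArg _ (Subtype.ext hxy))

variable (hN : IsCStarNetBundle N)

def transport {a b o : K} (hao : a ≤ o) (hbo : b ≤ o) : N.fib a ≃⋆ₐ[ℂ] N.fib b :=
  (N.holEquiv hN hao).trans (N.holEquiv hN hbo).symm

@[simp] theorem incl_transport {a b o : K} (hao : a ≤ o) (hbo : b ≤ o) (x : N.fib a) :
    N.incl hbo (N.transport hN hao hbo x) = N.incl hao x :=
  (N.holEquiv hN hbo).apply_symm_apply (N.incl hao x)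

@[simp] theorem holEquiv_symm_incl {a o : K} (h : a ≤ o) (x : N.fib a) :
    (N.holEquiv hN h).symm (N.incl h x) = x :=
  (N.holEquiv hN h).symm_apply_apply x

theorem transport_trans {a b c o : K} (hao : a ≤ o) (hbo : b ≤ o) (hco : c ≤ o) :
    (N.transport hN hao hbo).trans (N.transport hN hbo hco) = N.transport hN hao hco := by
  ext x
  apply N.incl_injective hco
  simp only [StarAlgEquiv.trans_apply, incl_transport]

theorem transport_incl {c a b o : K} (hca : c ≤ a) (hao : a ≤ o) (hbo : b ≤ o) (x : N.fib c) :
    N.transport hN hao hbo (N.incl hca x) = N.transport hN (hca.trans hao) hbo x := by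
  apply N.incl_injective hbo
  simp only [incl_transport, N.incl_comp]

def TransportIndependent : Prop :=
  ∀ ⦃a b o o' : K⦄ (hao : a ≤ o) (hbo : b ≤ o) (hao' : a ≤ o') (hbo' : b ≤ o'),
    N.transport hN hao hbo = N.transport hN hao' hbo'

theorem transportIndependent_of_cechDomain_eq_univ (hglob : CechDomain N = Set.univ) :
    N.TransportIndependent hN := by
  intro a b o o' hao hbo hao' hbo'
  ext x
  apply N.incl_injective hbo'
  rw [incl_transport]
  exact (N.incl_eq_incl_of_cechDomain_eq_univ hglob hao hbo hao' hbo'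
    (N.incl_transport hN hao hbo x).symm).symm

variable {N hN}

theorem TransportIndependent.transport_trans_transport (hind : N.TransportIndependent hN)
    {a b c o₁ o₂ o₃ W : K} (hao₁ : a ≤ o₁) (hbo₁ : b ≤ o₁) (hbo₂ : b ≤ o₂) (hco₂ : c ≤ o₂)
    (hao₃ : a ≤ o₃) (hco₃ : c ≤ o₃) (haW : a ≤ W) (hbW : b ≤ W) (hcW : c ≤ W) :
    (N.transport hN hao₁ hbo₁).trans (N.transport hN hbo₂ hco₂) = N.transport hN hao₃ hco₃ := by
  rw [hind hao₁ hbo₁ haW hbW, hind hbo₂ hco₂ hbW hcW, transport_trans, hind haW hcW]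

theorem TransportIndependent.isTrivialNet (hind : N.TransportIndependent hN) (S : Set K)
    (hS : ∀ a, ∃ s ∈ S, s ≤ a)
    (hS₃ : ∀ s ∈ S, ∀ t ∈ S, ∀ r ∈ S, BddAbove ({s, t, r} : Set K)) :
    IsTrivialNet N := by
  intro o₀
  choose s hsS hs using hS
  have hbdd a b c : BddAbove ({s a, s b, s c} : Set K) := hS₃ _ (hsS a) _ (hsS b) _ (hsS c)
  choose W hW using fun a => hbdd a o₀ o₀
  have hsW a : s a ≤ W a := hW a (by simp)
  have hs₀W a : s o₀ ≤ W a := hW a (by simp)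
  refine ⟨fun a => (N.holEquiv hN (hs a)).symm.trans
    ((N.transport hN (hsW a) (hs₀W a)).trans (N.holEquiv hN (hs o₀))), ?_⟩
  intro a o h x
  obtain ⟨u, rfl⟩ := (hN (hs a)).surjective x
  obtain ⟨V, hV⟩ := hbdd a o o₀
  have hincl : (N.holEquiv hN (hs o)).symm (N.incl h (N.incl (hs a) u)) =
      N.transport hN ((hs a).trans h) (hs o) u :=
    N.transport_incl hN (hs a) h (hs o) u
  simp only [StarAlgEquiv.trans_apply, hincl, holEquiv_symm_incl]
  exact congrArg _ (DFunLike.congr_fun (hind.transport_trans_transport _ _ _ _ (hsW a) (hs₀W a)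
    (hV (by simp)) (hV (by simp)) (hV (by simp))) u)

end CStarNet

namespace CircleIntervals

def arc (x L : ℝ) : Set (AddCircle (1 : ℝ)) :=
  ((↑) : ℝ → AddCircle (1 : ℝ)) '' Set.Ioo x (x + L)

theorem coe_add_intCast (z : ℝ) (k : ℤ) : ((z + k : ℝ) : AddCircle (1 : ℝ)) = z := by
  rw [AddCircle.coe_add, add_eq_left, AddCircle.coe_eq_zero_iff]
  exact ⟨k, by simp⟩

theorem exists_intCast_eq_sub_of_coe_eq {x y : ℝ} (h : (x : AddCircle (1 : ℝ)) = y) :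
    ∃ k : ℤ, (k : ℝ) = x - y := by
  rw [← sub_eq_zero, ← AddCircle.coe_sub, AddCircle.coe_eq_zero_iff] at h
  simpa using h

theorem arc_subset_arc {x L y M : ℝ} (k : ℤ) (hy : y ≤ x + k) (hM : x + k + L ≤ y + M) :
    arc x L ⊆ arc y M := by
  rintro _ ⟨z, hz, rfl⟩
  exact ⟨z + k, ⟨by linarith [hz.1], by linarith [hz.2]⟩, coe_add_intCast z k⟩

theorem closure_arc_ne_univ (x : ℝ) {L : ℝ} (hL : L < 1) : closure (arc x L) ≠ Set.univ := by
  intro hcl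
  have hclosed : IsClosed (((↑) : ℝ → AddCircle (1 : ℝ)) '' Set.Icc x (x + L)) :=
    (isCompact_Icc.image (AddCircle.continuous_mk' 1)).isClosed
  -- the midpoint of the complementary arc is missed
  obtain ⟨z, hz, hze⟩ : ((x + (1 + L) / 2 : ℝ) : AddCircle (1 : ℝ)) ∈
      ((↑) : ℝ → AddCircle (1 : ℝ)) '' Set.Icc x (x + L) :=
    closure_minimal (Set.image_mono Set.Ioo_subset_Icc_self) hclosed (hcl ▸ Set.mem_univ _)
  obtain ⟨k, hk⟩ := exists_intCast_eq_sub_of_coe_eq hze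
  have hk0 : (k : ℝ) < 0 := by linarith [hz.2]
  have hk1 : (-1 : ℝ) < k := by linarith [hz.1]
  norm_cast at hk0 hk1
  omega

def ofArc (x : ℝ) {L : ℝ} (hL₀ : 0 < L) (hL₁ : L < 1) : CircleIntervals :=
  ⟨arc x L, QuotientAddGroup.isOpenMap_coe _ isOpen_Ioo,
    (isConnected_Ioo (by linarith)).image _ (AddCircle.continuous_mk' 1).continuousOn,
    closure_arc_ne_univ x hL₁⟩

def IsShort (I : CircleIntervals) : Prop :=
  ∃ x : ℝ, I.val ⊆ arc x (1 / 8)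

theorem exists_isShort_le (I : CircleIntervals) : ∃ J ∈ {J | IsShort J}, J ≤ I := by
  obtain ⟨p, hp⟩ := I.2.2.1.nonempty
  obtain ⟨x, rfl⟩ := QuotientAddGroup.mk_surjective p
  obtain ⟨ε, hε, hball⟩ :=
    Metric.isOpen_iff.mp (I.2.1.preimage (AddCircle.continuous_mk' 1)) x hp
  set r := min (ε / 2) (1 / 16)
  have hr₀ : 0 < r := lt_min (by linarith) (by norm_num)
  have hr₁ : r ≤ 1 / 16 := min_le_right _ _
  have hrε : r ≤ ε / 2 := min_le_left _ _
  refine ⟨ofArc (x - r) (L := 2 * r) (by linarith) (by linarith),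
    ⟨x - r, arc_subset_arc 0 (by push_cast; linarith) (by push_cast; linarith)⟩, ?_⟩
  rintro _ ⟨z, hz, rfl⟩
  apply hball
  rw [Metric.mem_ball, Real.dist_eq, abs_lt]
  constructor <;> linarith [hz.1, hz.2]

theorem exists_Icc_of_sorted (u b c : ℝ) (hb : 0 ≤ b) (hbc : b ≤ c) (hc : c < 1) :
    ∃ y : ℝ, ∀ z ∈ ({u, u + b, u + c} : Set ℝ), ∃ k : ℤ, z + k ∈ Set.Icc y (y + 2 / 3) := by
  simp only [Set.mem_insert_iff, Set.mem_singleton_iff, forall_eq_or_imp, forall_eq,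
    Set.mem_Icc]
  rcases le_or_gt c (2 / 3) with hc' | hc'
  · refine ⟨u, ⟨0, ?_⟩, ⟨0, ?_⟩, ⟨0, ?_⟩⟩ <;> (push_cast; constructor <;> linarith)
  rcases le_or_gt b (c - 1 / 3) with hb' | hb'
  · refine ⟨u + c - 1, ⟨0, ?_⟩, ⟨0, ?_⟩, ⟨-1, ?_⟩⟩ <;> (push_cast; constructor <;> linarith)
  · refine ⟨u + b, ⟨1, ?_⟩, ⟨0, ?_⟩, ⟨0, ?_⟩⟩ <;> (push_cast; constructor <;> linarith)

theorem exists_Icc_of_three (u v w : ℝ) :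
    ∃ y : ℝ, ∀ z ∈ ({u, v, w} : Set ℝ), ∃ k : ℤ, z + k ∈ Set.Icc y (y + 2 / 3) := by
  wlog h : Int.fract (v - u) ≤ Int.fract (w - u) generalizing v w
  · simpa only [Set.pair_comm w v] using this w v (le_of_not_ge h)
  obtain ⟨y, hy⟩ := exists_Icc_of_sorted u _ _ (Int.fract_nonneg _) h (Int.fract_lt_one _)
  refine ⟨y, ?_⟩
  have hshift (z : ℝ) (hz : ∃ k : ℤ, u + Int.fract (z - u) + k ∈ Set.Icc y (y + 2 / 3)) :
      ∃ k : ℤ, z + k ∈ Set.Icc y (y + 2 / 3) := by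
    obtain ⟨k, hk⟩ := hz
    refine ⟨k - ⌊z - u⌋, ?_⟩
    rw [Int.fract] at hk
    push_cast
    convert hk using 1
    ring
  rintro z (rfl | rfl | rfl)
  · exact hy z (by simp)
  · exact hshift z (hy _ (by simp))
  · exact hshift z (hy _ (by simp))

theorem bddAbove_of_isShort : ∀ s ∈ {J | IsShort J}, ∀ t ∈ {J | IsShort J},
    ∀ r ∈ {J | IsShort J}, BddAbove ({s, t, r} : Set CircleIntervals) := by
  rintro s ⟨xs, hs⟩ t ⟨xt, ht⟩ r ⟨xr, hr⟩
  obtain ⟨y, hy⟩ := exists_Icc_of_three xs xt xr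
  -- the three arcs of length 1/8 start in `[y, y + 2/3]`, and 2/3 + 1/8 = 19/24 < 1
  refine ⟨ofArc y (L := 19 / 24) (by norm_num) (by norm_num), ?_⟩
  have hsub (x : ℝ) (hx : x ∈ ({xs, xt, xr} : Set ℝ)) : arc x (1 / 8) ⊆ arc y (19 / 24) := by
    obtain ⟨k, hk₁, hk₂⟩ := hy x hx
    exact arc_subset_arc k hk₁ (by linarith)
  rintro _ (rfl | rfl | rfl)
  · exact hs.trans (hsub xs (by simp))
  · exact ht.trans (hsub xt (by simp))
  · exact hr.trans (hsub xr (by simp))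

end CircleIntervals

/-- every C*-net bundle over the poset of intervals of `S¹` whose Čech
cocycle is globally defined is trivial. -/
theorem statement_19 (N : CStarNet.{0, v} CircleIntervals)
    (hN : IsCStarNetBundle N) (hglob : CechDomain N = Set.univ) :
    IsTrivialNet N :=
  (N.transportIndependent_of_cechDomain_eq_univ hN hglob).isTrivialNet _
    CircleIntervals.exists_isShort_le CircleIntervals.bddAbove_of_isShort

end AQFT
end
end
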